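/- In the setting of a cocommutative coalgebra extension ι : C → C̃ = C ⊕ X with symmetric 2-cocycle ω(x) = Σ ω₁(x)⊗ω₂(x), and an associative multiplication m : C → Hom(A⊗A,A), the obstruction ζ : X → Hom(A^{⊗3},A) defined by ζ(x) = Σ m(ω₁(x))∘(id_A⊗m(ω₂(x))) − Σ m(ω₁(x))∘(m(ω₂(x))⊗id_A) is a 3-cocycle in the complex C_X^*(A,m): d_X^3(ζ) = 0. -/

import Mathlib

open TensorProduct

noncomputable section

namespace DefCx2

variable {k : Type*} [Field k]
variable {A : Type*} [AddCommGroup A] [Module k A]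
variable {C : Type*} [AddCommGroup C] [Module k C] [Coalgebra k C]
variable {X : Type*} [AddCommGroup X] [Module k X]

/-- Convolution-associativity of `μ : D → Hom(A⊗A, A)` with respect to an (explicitly
given) comultiplication `Δ` on `D`:
`Σ μ(d₍₁₎)∘(μ(d₍₂₎)⊗A) = Σ μ(d₍₁₎)∘(A⊗μ(d₍₂₎))` as maps `(A⊗A)⊗A → A`. -/
def ConvAssocWith {D : Type*} [AddCommGroup D] [Module k D]
    (Δ : D →ₗ[k] D ⊗[k] D) (μ : D →ₗ[k] (A ⊗[k] A →ₗ[k] A)) : Prop :=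
  TensorProduct.lift (LinearMap.mk₂ k
      (fun d d' => (μ d) ∘ₗ LinearMap.rTensor A (μ d'))
      (by intro x y c; simp [map_add, LinearMap.add_comp])
      (by intro r x c; simp [map_smul, LinearMap.smul_comp])
      (by intro x c c'; simp [map_add, LinearMap.rTensor_add, LinearMap.comp_add])
      (by intro r x c; simp [map_smul, LinearMap.rTensor_smul, LinearMap.comp_smul])) ∘ₗ Δ
  =
  TensorProduct.lift (LinearMap.mk₂ k
      (fun d d' => (μ d) ∘ₗ LinearMap.lTensor A (μ d') ∘ₗ
        (TensorProduct.assoc k A A A).toLinearMap)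
      (by intro x y c; simp [map_add, LinearMap.add_comp])
      (by intro r x c; simp [map_smul, LinearMap.smul_comp])
      (by intro x c c'
          simp [map_add, LinearMap.lTensor_add, LinearMap.comp_add, LinearMap.add_comp])
      (by intro r x c
          simp [map_smul, LinearMap.lTensor_smul, LinearMap.comp_smul,
            LinearMap.smul_comp])) ∘ₗ Δ

/-- The degree-2 differential
`d²(ν)(x) = Σ m(x₍1₎)∘(A⊗ν(x₍0₎)) − Σ ν(x₍0₎)∘(m(x₍1₎)⊗A) + Σ ν(x₍0₎)∘(A⊗m(x₍1₎))
 − Σ m(x₍1₎)∘(ν(x₍0₎)⊗A)` as maps `(A⊗A)⊗A → A`. -/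
def d2 (ρ : X →ₗ[k] X ⊗[k] C) (m : C →ₗ[k] (A ⊗[k] A →ₗ[k] A))
    (ν : X →ₗ[k] (A ⊗[k] A →ₗ[k] A)) :
    X →ₗ[k] ((A ⊗[k] A) ⊗[k] A →ₗ[k] A) :=
  TensorProduct.lift (LinearMap.mk₂ k
    (fun x c =>
      (m c) ∘ₗ LinearMap.lTensor A (ν x) ∘ₗ (TensorProduct.assoc k A A A).toLinearMap
      - (ν x) ∘ₗ LinearMap.rTensor A (m c)
      + (ν x) ∘ₗ LinearMap.lTensor A (m c) ∘ₗ (TensorProduct.assoc k A A A).toLinearMap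
      - (m c) ∘ₗ LinearMap.rTensor A (ν x))
    (by intro x y c
        simp [map_add, LinearMap.lTensor_add, LinearMap.rTensor_add, LinearMap.add_comp,
          LinearMap.comp_add]
        abel)
    (by intro r x c
        simp [map_smul, LinearMap.lTensor_smul, LinearMap.rTensor_smul,
          LinearMap.smul_comp, LinearMap.comp_smul, smul_sub, smul_add])
    (by intro x c c'
        simp [map_add, LinearMap.lTensor_add, LinearMap.rTensor_add, LinearMap.add_comp,
          LinearMap.comp_add]
        abel)
    (by intro r x c
        simp [map_smul, LinearMap.lTensor_smul, LinearMap.rTensor_smul,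
          LinearMap.smul_comp, LinearMap.comp_smul, smul_sub, smul_add])) ∘ₗ ρ

/-- The identification `((A⊗A)⊗A)⊗A ≃ A⊗((A⊗A)⊗A)`. -/
def eA4first : (((A ⊗[k] A) ⊗[k] A) ⊗[k] A) ≃ₗ[k] A ⊗[k] ((A ⊗[k] A) ⊗[k] A) :=
  ((TensorProduct.assoc k (A ⊗[k] A) A A).trans
    (TensorProduct.assoc k A A (A ⊗[k] A))).trans
      (TensorProduct.congr (LinearEquiv.refl k A) (TensorProduct.assoc k A A A).symm)

/-- The degree-3 differential `d³ = Σ_{i=0}^{4} (−1)^i d_i³` of the complex `C_X^*(A,m)`,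
as maps `((A⊗A)⊗A)⊗A → A`. -/
def d3 (ρ : X →ₗ[k] X ⊗[k] C) (m : C →ₗ[k] (A ⊗[k] A →ₗ[k] A))
    (ν : X →ₗ[k] ((A ⊗[k] A) ⊗[k] A →ₗ[k] A)) :
    X →ₗ[k] (((A ⊗[k] A) ⊗[k] A) ⊗[k] A →ₗ[k] A) :=
  TensorProduct.lift (LinearMap.mk₂ k
    (fun x c =>
      (m c) ∘ₗ LinearMap.lTensor A (ν x) ∘ₗ (eA4first (k := k) (A := A)).toLinearMap
      - (ν x) ∘ₗ LinearMap.rTensor A (LinearMap.rTensor A (m c))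
      + (ν x) ∘ₗ LinearMap.rTensor A (LinearMap.lTensor A (m c)) ∘ₗ
          (TensorProduct.congr (TensorProduct.assoc k A A A)
            (LinearEquiv.refl k A)).toLinearMap
      - (ν x) ∘ₗ LinearMap.lTensor (A ⊗[k] A) (m c) ∘ₗ
          (TensorProduct.assoc k (A ⊗[k] A) A A).toLinearMap
      + (m c) ∘ₗ LinearMap.rTensor A (ν x))
    (by intro x y c
        simp [map_add, LinearMap.lTensor_add, LinearMap.rTensor_add, LinearMap.add_comp,
          LinearMap.comp_add]
        abel)
    (by intro r x c
        simp [map_smul, LinearMap.lTensor_smul, LinearMap.rTensor_smul,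
          LinearMap.smul_comp, LinearMap.comp_smul, smul_sub, smul_add])
    (by intro x c c'
        simp [map_add, LinearMap.lTensor_add, LinearMap.rTensor_add, LinearMap.add_comp,
          LinearMap.comp_add]
        abel)
    (by intro r x c
        simp [map_smul, LinearMap.lTensor_smul, LinearMap.rTensor_smul,
          LinearMap.smul_comp, LinearMap.comp_smul, smul_sub, smul_add])) ∘ₗ ρ

/-- The obstruction
`ζ(x) = Σ m(ω₁(x))∘(A⊗m(ω₂(x))) − Σ m(ω₁(x))∘(m(ω₂(x))⊗A)` as maps `(A⊗A)⊗A → A`. -/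
def zeta (ω : X →ₗ[k] C ⊗[k] C) (m : C →ₗ[k] (A ⊗[k] A →ₗ[k] A)) :
    X →ₗ[k] ((A ⊗[k] A) ⊗[k] A →ₗ[k] A) :=
  TensorProduct.lift (LinearMap.mk₂ k
    (fun c c' =>
      (m c) ∘ₗ LinearMap.lTensor A (m c') ∘ₗ (TensorProduct.assoc k A A A).toLinearMap
      - (m c) ∘ₗ LinearMap.rTensor A (m c'))
    (by intro x y c; simp [map_add, LinearMap.add_comp]; abel)
    (by intro r x c; simp [map_smul, LinearMap.smul_comp, smul_sub])
    (by intro x c c'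
        simp [map_add, LinearMap.lTensor_add, LinearMap.rTensor_add, LinearMap.comp_add,
          LinearMap.add_comp]
        abel)
    (by intro r x c
        simp [map_smul, LinearMap.lTensor_smul, LinearMap.rTensor_smul,
          LinearMap.comp_smul, LinearMap.smul_comp, smul_sub])) ∘ₗ ω

/-- The comultiplication on `C̃ = C ⊕ X` built from the comultiplication of `C`, a
symmetric coaction `ρ` on `X` and a symmetric 2-cocycle `ω : X → C ⊗ C`. -/
def extComul (ρ : X →ₗ[k] X ⊗[k] C) (ω : X →ₗ[k] C ⊗[k] C) :
    (C × X) →ₗ[k] (C × X) ⊗[k] (C × X) :=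
  TensorProduct.map (LinearMap.inl k C X) (LinearMap.inl k C X) ∘ₗ
      (Coalgebra.comul : C →ₗ[k] C ⊗[k] C) ∘ₗ LinearMap.fst k C X
    + TensorProduct.map (LinearMap.inl k C X) (LinearMap.inr k C X) ∘ₗ
      ((TensorProduct.comm k X C).toLinearMap ∘ₗ ρ) ∘ₗ LinearMap.snd k C X
    + TensorProduct.map (LinearMap.inr k C X) (LinearMap.inl k C X) ∘ₗ
      ρ ∘ₗ LinearMap.snd k C X
    + TensorProduct.map (LinearMap.inl k C X) (LinearMap.inl k C X) ∘ₗ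
      ω ∘ₗ LinearMap.snd k C X

end DefCx2

end

/-!
Write `ζ = assocDefect m ∘ ω`. The five faces of `d³ζ` split as
`outerFaces m ∘ (1 ⊗ ω) ∘ τρ + innerFaces m ∘ (ω ⊗ 1) ∘ ρ`. Rebracketing the triple products of
`m` gives `innerFaces m = (-outerFaces m + K - K ∘ (1 ⊗ τ)) ∘ α` with `K = mulMapMul m`, and the
2-cocycle condition rewrites `α ∘ (ω ⊗ 1) ∘ ρ` as `(1 ⊗ ω) ∘ τρ - α ∘ (Δ ⊗ 1) ∘ ω + (1 ⊗ Δ) ∘ ω`.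
Symmetry of `ω` and of `Δ` kills the `K`-terms, associativity of `m` (`assocDefect m ∘ Δ = 0`)
kills the `Δ`-terms, and what is left cancels the outer faces.
-/

namespace HochschildObstruction

open DefCx2 LinearMap

variable {k : Type*} [Field k] {A C : Type*} [AddCommGroup A] [Module k A]
  [AddCommGroup C] [Module k C]

def assocDefect (m : C →ₗ[k] (A ⊗[k] A →ₗ[k] A)) :
    C ⊗[k] C →ₗ[k] ((A ⊗[k] A) ⊗[k] A →ₗ[k] A) :=
  TensorProduct.lift (mk₂ k
    (fun c c' => m c ∘ₗ lTensor A (m c') ∘ₗ (TensorProduct.assoc k A A A).toLinearMap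
      - m c ∘ₗ rTensor A (m c'))
    (by intros; simp only [map_add, add_comp]; abel)
    (by intros; simp only [map_smul, smul_comp, smul_sub])
    (by intros; simp only [map_add, lTensor_add, rTensor_add, comp_add, add_comp]; abel)
    (by intros; simp only [map_smul, lTensor_smul, rTensor_smul, comp_smul, smul_comp,
      smul_sub]))

/-- The faces `d₀, d₄` of `d³` on a cochain `assocDefect m ∘ f`; the coaction's factor of `C` comes
first here, and last in `innerFaces` (the faces `d₁, d₂, d₃`). -/
def outerFaces (m : C →ₗ[k] (A ⊗[k] A →ₗ[k] A)) :
    C ⊗[k] (C ⊗[k] C) →ₗ[k] (((A ⊗[k] A) ⊗[k] A) ⊗[k] A →ₗ[k] A) :=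
  TensorProduct.lift (mk₂ k
    (fun c y => m c ∘ₗ lTensor A (assocDefect m y) ∘ₗ eA4first.toLinearMap
      + m c ∘ₗ rTensor A (assocDefect m y))
    (by intros; simp only [map_add, add_comp]; abel)
    (by intros; simp only [map_smul, smul_comp, smul_add])
    (by intros; simp only [map_add, lTensor_add, rTensor_add, comp_add, add_comp]; abel)
    (by intros; simp only [map_smul, lTensor_smul, rTensor_smul, comp_smul, smul_comp,
      smul_add]))

def innerFaces (m : C →ₗ[k] (A ⊗[k] A →ₗ[k] A)) :
    (C ⊗[k] C) ⊗[k] C →ₗ[k] (((A ⊗[k] A) ⊗[k] A) ⊗[k] A →ₗ[k] A) :=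
  TensorProduct.lift (mk₂ k
    (fun y c =>
      - (assocDefect m y ∘ₗ rTensor A (rTensor A (m c)))
      + assocDefect m y ∘ₗ rTensor A (lTensor A (m c)) ∘ₗ
          (TensorProduct.congr (TensorProduct.assoc k A A A) (LinearEquiv.refl k A)).toLinearMap
      - assocDefect m y ∘ₗ lTensor (A ⊗[k] A) (m c) ∘ₗ
          (TensorProduct.assoc k (A ⊗[k] A) A A).toLinearMap)
    (by intros; simp only [map_add, add_comp]; abel)
    (by intros; simp only [map_smul, smul_comp, smul_add, smul_sub, smul_neg])
    (by intros; simp only [map_add, lTensor_add, rTensor_add, comp_add, add_comp]; abel)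
    (by intros; simp only [map_smul, lTensor_smul, rTensor_smul, comp_smul, smul_comp,
      smul_add, smul_sub, smul_neg]))

def mulMapMul (m : C →ₗ[k] (A ⊗[k] A →ₗ[k] A)) :
    C ⊗[k] (C ⊗[k] C) →ₗ[k] (((A ⊗[k] A) ⊗[k] A) ⊗[k] A →ₗ[k] A) :=
  TensorProduct.lift (mk₂ k
    (fun c y => m c ∘ₗ
      (TensorProduct.homTensorHomMap (RingHom.id k) _ _ _ _ ∘ₗ TensorProduct.map m m) y ∘ₗ
      (TensorProduct.assoc k (A ⊗[k] A) A A).toLinearMap)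
    (by intros; simp only [map_add, add_comp])
    (by intros; simp only [map_smul, smul_comp])
    (by intros; simp only [map_add, comp_add, add_comp])
    (by intros; simp only [map_smul, comp_smul, smul_comp]))

def reassocInnerFaces (m : C →ₗ[k] (A ⊗[k] A →ₗ[k] A)) :
    C ⊗[k] (C ⊗[k] C) →ₗ[k] (((A ⊗[k] A) ⊗[k] A) ⊗[k] A →ₗ[k] A) :=
  -outerFaces m + mulMapMul m - mulMapMul m ∘ₗ lTensor C (TensorProduct.comm k C C).toLinearMap

/- Expanding the six products `m u ∘ m v ∘ m w` in their various bracketings, the inner faces of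
an associator defect regroup as minus its outer faces plus a term antisymmetric in `v, w`. -/
theorem reassocInnerFaces_comp_assoc (m : C →ₗ[k] (A ⊗[k] A →ₗ[k] A)) :
    reassocInnerFaces m ∘ₗ (TensorProduct.assoc k C C C).toLinearMap = innerFaces m := by
  refine TensorProduct.ext_threefold fun u v w => TensorProduct.ext_fourfold fun a b c d => ?_
  simp only [reassocInnerFaces, outerFaces, innerFaces, mulMapMul, assocDefect, eA4first,
    coe_comp, Function.comp_apply, LinearEquiv.coe_coe, LinearEquiv.trans_apply,
    LinearEquiv.refl_apply, LinearEquiv.refl_toLinearMap, toLinearMap_congr, id_coe, id_eq,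
    TensorProduct.assoc_tmul, TensorProduct.assoc_symm_tmul, TensorProduct.comm_tmul,
    TensorProduct.congr_tmul, TensorProduct.map_tmul, TensorProduct.homTensorHomMap_apply,
    TensorProduct.lift.tmul, mk₂_apply, lTensor_tmul, rTensor_tmul, rTensor_comp_map,
    lTensor_sub, rTensor_sub, map_sub, LinearMap.sub_apply, LinearMap.add_apply,
    LinearMap.neg_apply, neg_add_rev, neg_sub]
  abel

theorem reassocInnerFaces_comp_lTensor_of_comm {Y : Type*} [AddCommGroup Y] [Module k Y]
    (m : C →ₗ[k] (A ⊗[k] A →ₗ[k] A)) {f : Y →ₗ[k] C ⊗[k] C}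
    (hf : (TensorProduct.comm k C C).toLinearMap ∘ₗ f = f) :
    reassocInnerFaces m ∘ₗ lTensor C f = -(outerFaces m ∘ₗ lTensor C f) := by
  rw [reassocInnerFaces, sub_comp, add_comp, neg_comp, comp_assoc, ← lTensor_comp, hf]
  abel

theorem outerFaces_comp_lTensor_eq_zero {Y : Type*} [AddCommGroup Y] [Module k Y]
    {m : C →ₗ[k] (A ⊗[k] A →ₗ[k] A)} {f : Y →ₗ[k] C ⊗[k] C}
    (hf : assocDefect m ∘ₗ f = 0) : outerFaces m ∘ₗ lTensor C f = 0 := by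
  refine TensorProduct.ext' fun c y => ?_
  simp [outerFaces, ← comp_apply (assocDefect m), hf]

theorem innerFaces_comp_rTensor_eq_zero {Y : Type*} [AddCommGroup Y] [Module k Y]
    {m : C →ₗ[k] (A ⊗[k] A →ₗ[k] A)} {f : Y →ₗ[k] C ⊗[k] C}
    (hf : assocDefect m ∘ₗ f = 0) : innerFaces m ∘ₗ rTensor C f = 0 := by
  refine TensorProduct.ext' fun y c => ?_
  simp [innerFaces, ← comp_apply (assocDefect m), hf]

theorem assocDefect_comp_eq_zero {Δ : C →ₗ[k] C ⊗[k] C} {m : C →ₗ[k] (A ⊗[k] A →ₗ[k] A)}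
    (hm : ConvAssocWith Δ m) : assocDefect m ∘ₗ Δ = 0 := by
  rw [ConvAssocWith, ← sub_eq_zero, ← sub_comp] at hm
  rw [← neg_eq_zero, ← neg_comp, ← hm]
  congr 1
  refine TensorProduct.ext' fun c c' => ?_
  simp [assocDefect]

theorem d3_assocDefect_comp {X : Type*} [AddCommGroup X] [Module k X] (ρ : X →ₗ[k] X ⊗[k] C)
    (m : C →ₗ[k] (A ⊗[k] A →ₗ[k] A)) (f : X →ₗ[k] C ⊗[k] C) :
    d3 ρ m (assocDefect m ∘ₗ f) =
      outerFaces m ∘ₗ lTensor C f ∘ₗ (TensorProduct.comm k X C).toLinearMap ∘ₗ ρ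
        + innerFaces m ∘ₗ rTensor C f ∘ₗ ρ := by
  simp only [← comp_assoc, ← add_comp]
  refine congrArg (· ∘ₗ ρ) (TensorProduct.ext' fun x c => ?_)
  simp only [outerFaces, innerFaces, coe_comp, Function.comp_apply, LinearEquiv.coe_coe,
    LinearEquiv.refl_toLinearMap, toLinearMap_congr, rTensor_comp_map, TensorProduct.lift.tmul,
    mk₂_apply, LinearMap.add_apply, TensorProduct.comm_tmul, lTensor_tmul, rTensor_tmul]
  abel

end HochschildObstruction

open HochschildObstruction LinearMap

open DefCx2 in
theorem obstruction_is_three_cocycle {k : Type*} [Field k] {A C X : Type*}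
    [AddCommGroup A] [Module k A]
    [AddCommGroup C] [Module k C] [Coalgebra k C]
    [AddCommGroup X] [Module k X]
    (hcocomm : (TensorProduct.comm k C C).toLinearMap ∘ₗ
      (Coalgebra.comul : C →ₗ[k] C ⊗[k] C) = Coalgebra.comul)
    (ρ : X →ₗ[k] X ⊗[k] C)
    (ω : X →ₗ[k] C ⊗[k] C)
    (hsymm : (TensorProduct.comm k C C).toLinearMap ∘ₗ ω = ω)
    (hcocycle : LinearMap.lTensor C ω ∘ₗ ((TensorProduct.comm k X C).toLinearMap ∘ₗ ρ)
      - (TensorProduct.assoc k C C C).toLinearMap ∘ₗ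
          LinearMap.rTensor C (Coalgebra.comul : C →ₗ[k] C ⊗[k] C) ∘ₗ ω
      + LinearMap.lTensor C (Coalgebra.comul : C →ₗ[k] C ⊗[k] C) ∘ₗ ω
      - (TensorProduct.assoc k C C C).toLinearMap ∘ₗ LinearMap.rTensor C ω ∘ₗ ρ = 0)
    (m : C →ₗ[k] (A ⊗[k] A →ₗ[k] A))
    (hm : ConvAssocWith (Coalgebra.comul : C →ₗ[k] C ⊗[k] C) m)
    :
    d3 ρ m (zeta ω m) = 0 := by
  have hassoc := assocDefect_comp_eq_zero hm
  rw [zeta, ← assocDefect, d3_assocDefect_comp, ← reassocInnerFaces_comp_assoc, comp_assoc,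
    (sub_eq_zero.mp hcocycle).symm]
  simp only [comp_add, comp_sub, ← comp_assoc, reassocInnerFaces_comp_lTensor_of_comm m hsymm,
    reassocInnerFaces_comp_lTensor_of_comm m hcocomm, reassocInnerFaces_comp_assoc,
    innerFaces_comp_rTensor_eq_zero hassoc, outerFaces_comp_lTensor_eq_zero hassoc, neg_comp,
    zero_comp]
  abel
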